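/- arXiv:2103.04564 — 2 statements merged into one kernel-verified Lean document; each statement's English description precedes it below -/
import Mathlib

section
/- Let a, b, c, d, θ₁, θ₂ be independent random variables with a, b, c, d uniform on [−1,1] and θ₁, θ₂ uniform on [0,1]. Then P((a+d−b−c)θ₁ + c − d < 0 or (a+d−b−c)θ₂ + c − d < 0) ≤ 0.6. -/
/-!
With `X = a - b` and `Y = c - d` the two expressions are `θᵢ X + (1 - θᵢ) Y`. Both are
nonnegative when `X, Y ≥ 0`; when `X < 0 ≤ Y`, `Y ≥ k (-X)` and `θ₁, θ₂ ≤ q`, where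
`k = q / (1 - q)`; and in the mirror case `Y < 0 ≤ X`, `X ≥ k (-Y)`, `θ₁, θ₂ ≥ 1 - q`.
`X` and `Y` are independent with the triangular law of a difference of two uniforms, under which
`P(X < 0, Y ≥ k (-X))` is an explicit piecewise rational function of `k`. Letting `q` run
through the grid `q_j = j / 30` and cutting the `θ`-square into the disjoint bands
`q_j < max θᵢ ≤ q_{j+1}` (and their mirror images under `θ ↦ 1 - θ`) bounds the probability
that both expressions are nonnegative below by
`1/4 + 2 Σ_j P(X < 0, Y ≥ k_{j+1} (-X)) (q_{j+1}² - q_j²) ≥ 2/5`.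
-/

open MeasureTheory ProbabilityTheory Set
open scoped ENNReal Topology

namespace StagHunt

theorem hasDerivAt_max_zero_pow {n : ℕ} (hn : 2 ≤ n) (x : ℝ) :
    HasDerivAt (fun y : ℝ => max y 0 ^ n) (n * max x 0 ^ (n - 1)) x := by
  refine hasDerivAt_of_hasDerivAt_of_ne' (f := fun y : ℝ => max y 0 ^ n)
    (g := fun y : ℝ => n * max y 0 ^ (n - 1)) (x := 0) (fun y hy => ?_) (by fun_prop)
    (by fun_prop) x
  rcases hy.lt_or_gt with hy | hy
  · have hzero : (fun z : ℝ => max z 0 ^ n) =ᶠ[𝓝 y] fun _ => 0 := by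
      filter_upwards [Iio_mem_nhds hy] with z hz
      simp [max_eq_right (mem_Iio.1 hz).le, zero_pow (by omega : n ≠ 0)]
    simpa [max_eq_right hy.le, zero_pow (by omega : n - 1 ≠ 0)] using
      (hasDerivAt_const y (0 : ℝ)).congr_of_eventuallyEq hzero
  · have hpow : (fun z : ℝ => max z 0 ^ n) =ᶠ[𝓝 y] fun z => z ^ n := by
      filter_upwards [Ioi_mem_nhds hy] with z hz
      rw [max_eq_left (mem_Ioi.1 hz).le]
    simpa [max_eq_left hy.le] using (hasDerivAt_pow n y).congr_of_eventuallyEq hpow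

instance : IsProbabilityMeasure (volume[|Icc (-1 : ℝ) 1]) :=
  cond_isProbabilityMeasure_of_finite (by simp [Real.volume_Icc]) (by simp [Real.volume_Icc])

theorem uniform_Iic {t : ℝ} (ht : t ≤ 1) :
    volume[|Icc (-1 : ℝ) 1] (Iic t) = ENNReal.ofReal ((t + 1) / 2) := by
  have hIcc : Icc (-1) 1 ∩ Iic t = Icc (-1) t := by
    ext x; simp only [mem_inter_iff, mem_Icc, mem_Iic]; grind
  rw [cond_apply measurableSet_Icc, hIcc, Real.volume_Icc, Real.volume_Icc,
    ENNReal.ofReal_div_of_pos two_pos]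
  norm_num [ENNReal.div_eq_inv_mul]

theorem setLIntegral_uniform_Ioi {f : ℝ → ℝ≥0∞} {g : ℝ → ℝ} {a : ℝ} (ha : a ∈ Icc (-1) 1)
    (hfg : ∀ x ∈ Ioc a 1, f x = ENNReal.ofReal (g x)) (hg : ContinuousOn g (Icc a 1))
    (hg0 : ∀ x ∈ Ioc a 1, 0 ≤ g x) :
    ∫⁻ x in Ioi a, f x ∂volume[|Icc (-1 : ℝ) 1] = ENNReal.ofReal ((∫ x in a..1, g x) / 2) := by
  have hIoc : Ioi a ∩ Icc (-1) 1 = Ioc a 1 := by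
    ext x; simp only [mem_inter_iff, mem_Ioi, mem_Icc, mem_Ioc]; grind
  rw [ProbabilityTheory.cond, Measure.restrict_smul, lintegral_smul_measure,
    Measure.restrict_restrict measurableSet_Ioi, hIoc,
    setLIntegral_congr_fun measurableSet_Ioc hfg,
    ← ofReal_integral_eq_lintegral_ofReal (hg.integrableOn_Icc.mono_set Ioc_subset_Icc_self)
      ((ae_restrict_iff' measurableSet_Ioc).2 (ae_of_all _ hg0)),
    intervalIntegral.integral_of_le ha.2, Real.volume_Icc, ENNReal.ofReal_div_of_pos two_pos]
  norm_num [ENNReal.div_eq_inv_mul]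

theorem lintegral_uniform {f : ℝ → ℝ≥0∞} {g : ℝ → ℝ}
    (hfg : ∀ x ∈ Icc (-1) 1, f x = ENNReal.ofReal (g x)) (hg : ContinuousOn g (Icc (-1) 1))
    (hg0 : ∀ x ∈ Icc (-1) 1, 0 ≤ g x) :
    ∫⁻ x, f x ∂volume[|Icc (-1 : ℝ) 1] = ENNReal.ofReal ((∫ x in (-1)..1, g x) / 2) := by
  have hIoi : ∀ᵐ x ∂volume[|Icc (-1 : ℝ) 1], x ∈ Ioi (-1) := by
    rw [ae_iff]
    simp only [mem_Ioi, not_lt]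
    exact (uniform_Iic (t := -1) (by norm_num)).trans (by norm_num)
  rw [← setLIntegral_uniform_Ioi ⟨le_rfl, by norm_num⟩ (fun x hx => hfg x (Ioc_subset_Icc_self hx))
    hg (fun x hx => hg0 x (Ioc_subset_Icc_self hx)), Measure.restrict_eq_self_of_ae_mem hIoi]

noncomputable def diffLaw (ν : Measure ℝ) : Measure ℝ := (ν.prod ν).map fun p => p.1 - p.2

instance {ν : Measure ℝ} [IsProbabilityMeasure ν] : IsProbabilityMeasure (diffLaw ν) :=
  Measure.isProbabilityMeasure_map (by fun_prop)

theorem lintegral_diffLaw {ν : Measure ℝ} [SFinite ν] {f : ℝ → ℝ≥0∞} (hf : Measurable f) :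
    ∫⁻ x, f x ∂diffLaw ν = ∫⁻ u, ∫⁻ v, f (u - v) ∂ν ∂ν := by
  rw [diffLaw, lintegral_map hf (by fun_prop),
    lintegral_prod (fun p : ℝ × ℝ => f (p.1 - p.2)) (hf.comp (by fun_prop)).aemeasurable]

local notation "τ" => diffLaw volume[|Icc (-1 : ℝ) 1]

theorem integral_ramp {s : ℝ} (hs : 0 ≤ s) :
    ∫ u in (-1)..1, max (u - s + 1) 0 / 2 = max (2 - s) 0 ^ 2 / 4 := by
  have hderiv : ∀ u ∈ uIcc (-1 : ℝ) 1,
      HasDerivAt (fun u => max (u - s + 1) 0 ^ 2 / 4) (max (u - s + 1) 0 / 2) u := by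
    intro u _
    refine (((hasDerivAt_max_zero_pow le_rfl _).comp u
      (((hasDerivAt_id u).sub_const s).add_const 1)).div_const 4).congr_deriv ?_
    norm_num; ring
  rw [intervalIntegral.integral_eq_sub_of_hasDerivAt hderiv
    ((by fun_prop : Continuous fun u : ℝ => max (u - s + 1) 0 / 2).intervalIntegrable _ _),
    max_eq_right (by linarith : -1 - s + 1 ≤ 0)]
  ring_nf

theorem diffLaw_uniform_Ici {s : ℝ} (hs : 0 ≤ s) :
    τ (Ici s) = ENNReal.ofReal (max (2 - s) 0 ^ 2 / 8) := by
  have hsection : ∀ u v : ℝ,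
      (Ici s).indicator 1 (u - v) = (Iic (u - s)).indicator (1 : ℝ → ℝ≥0∞) v := by
    intro u v
    simp only [indicator, mem_Ici, mem_Iic, le_sub_comm, Pi.one_apply]
  rw [← lintegral_indicator_one measurableSet_Ici,
    lintegral_diffLaw (measurable_one.indicator measurableSet_Ici)]
  simp_rw [hsection, lintegral_indicator_one measurableSet_Iic]
  rw [lintegral_uniform (g := fun u => max (u - s + 1) 0 / 2) _ (by fun_prop)
    (fun u _ => by positivity), integral_ramp hs]
  · congr 1; ring
  · intro u hu
    rw [uniform_Iic (by linarith [hu.2]), ← max_div_div_right zero_le_two, zero_div,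
      ENNReal.ofReal_max, ENNReal.ofReal_zero, max_eq_left zero_le]

def tailRegion (k : ℝ) : Set (ℝ × ℝ) := {p | p.1 < 0 ∧ k * -p.1 ≤ p.2}

noncomputable def tailProb (k : ℝ) : ℝ :=
  (16 - (16 - max (2 - 2 * k) 0 ^ 4) / (4 * k)) / (96 * k)

theorem measurableSet_tailRegion (k : ℝ) : MeasurableSet (tailRegion k) :=
  (measurableSet_lt measurable_fst measurable_const).inter
    (measurableSet_le (by fun_prop) measurable_snd)

theorem tailRegion_subset {k : ℝ} (hk : 0 ≤ k) : tailRegion k ⊆ Iio 0 ×ˢ Ici 0 :=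
  fun _ hp => ⟨hp.1, (mul_nonneg hk (neg_nonneg.2 hp.1.le)).trans hp.2⟩

theorem integral_tail_inner {k u : ℝ} (hk : 0 < k) :
    ∫ v in u..1, max (2 - k * (v - u)) 0 ^ 2 / 8 =
      (8 - max (2 - k * (1 - u)) 0 ^ 3) / (24 * k) := by
  have hderiv : ∀ v ∈ uIcc u 1, HasDerivAt (fun v => -max (2 - k * (v - u)) 0 ^ 3 / (24 * k))
      (max (2 - k * (v - u)) 0 ^ 2 / 8) v := by
    intro v _
    refine ((((hasDerivAt_max_zero_pow (by norm_num) _).comp v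
      ((((hasDerivAt_id v).sub_const u).const_mul k).const_sub 2)).neg).div_const
        (24 * k)).congr_deriv ?_
    field_simp
    norm_num
    ring
  rw [intervalIntegral.integral_eq_sub_of_hasDerivAt hderiv
    ((by fun_prop : Continuous fun v : ℝ => max (2 - k * (v - u)) 0 ^ 2 / 8).intervalIntegrable
      _ _)]
  norm_num
  ring

theorem integral_tail_outer {k : ℝ} (hk : 0 < k) :
    ∫ u in (-1)..1, (8 - max (2 - k * (1 - u)) 0 ^ 3) / (48 * k) =
      (16 - (16 - max (2 - 2 * k) 0 ^ 4) / (4 * k)) / (48 * k) := by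
  have hderiv : ∀ u ∈ uIcc (-1 : ℝ) 1,
      HasDerivAt (fun u => (8 * u - max (2 - k * (1 - u)) 0 ^ 4 / (4 * k)) / (48 * k))
        ((8 - max (2 - k * (1 - u)) 0 ^ 3) / (48 * k)) u := by
    intro u _
    refine ((((hasDerivAt_id u).const_mul 8).sub (((hasDerivAt_max_zero_pow (by norm_num) _).comp
      u (((hasDerivAt_id u).const_sub 1).const_mul k |>.const_sub 2)).div_const
        (4 * k))).div_const (48 * k)).congr_deriv ?_
    field_simp
    norm_num
    ring
  rw [intervalIntegral.integral_eq_sub_of_hasDerivAt hderiv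
    ((by fun_prop : Continuous fun u : ℝ =>
      (8 - max (2 - k * (1 - u)) 0 ^ 3) / (48 * k)).intervalIntegrable _ _)]
  norm_num
  field_simp
  ring

theorem diffLaw_prod_tailRegion {k : ℝ} (hk : 0 < k) :
    ((τ).prod τ) (tailRegion k) = ENNReal.ofReal (tailProb k) := by
  set f : ℝ → ℝ≥0∞ := (Iio 0).indicator fun x => ENNReal.ofReal (max (2 - k * -x) 0 ^ 2 / 8)
  have hsection : ∀ x, τ (Prod.mk x ⁻¹' tailRegion k) = f x := by
    intro x
    by_cases hx : x < 0
    · have hIci : Prod.mk x ⁻¹' tailRegion k = Ici (k * -x) := by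
        ext y; simp [tailRegion, hx]
      rw [hIci, diffLaw_uniform_Ici (by nlinarith)]
      simp [f, hx]
    · have hempty : Prod.mk x ⁻¹' tailRegion k = ∅ := by
        ext y; simp [tailRegion, hx]
      rw [hempty, measure_empty]
      simp [f, hx]
  have hinner : ∀ u ∈ Icc (-1 : ℝ) 1, ∫⁻ v, f (u - v) ∂volume[|Icc (-1 : ℝ) 1] =
      ENNReal.ofReal ((8 - max (2 - k * (1 - u)) 0 ^ 3) / (48 * k)) := by
    intro u hu
    have hshift : ∀ v, f (u - v) =
        (Ioi u).indicator (fun v => ENNReal.ofReal (max (2 - k * (v - u)) 0 ^ 2 / 8)) v := by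
      intro v
      simp only [f, indicator, mem_Iio, mem_Ioi, sub_neg, neg_sub]
    simp_rw [hshift]
    rw [lintegral_indicator measurableSet_Ioi, setLIntegral_uniform_Ioi hu (fun _ _ => rfl)
      (by fun_prop) (fun _ _ => by positivity), integral_tail_inner hk]
    congr 1
    field_simp
    ring
  have hinner_nonneg : ∀ u ∈ Icc (-1 : ℝ) 1,
      0 ≤ (8 - max (2 - k * (1 - u)) 0 ^ 3) / (48 * k) := by
    intro u hu
    have hmax : max (2 - k * (1 - u)) 0 ≤ 2 := max_le (by nlinarith [hu.2]) (by norm_num)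
    have := pow_le_pow_left₀ (le_max_right _ _) hmax 3
    exact div_nonneg (by linarith) (by positivity)
  rw [Measure.prod_apply (measurableSet_tailRegion k), lintegral_congr hsection,
    lintegral_diffLaw ((by fun_prop : Measurable _).indicator measurableSet_Iio),
    lintegral_uniform hinner (by fun_prop) hinner_nonneg, integral_tail_outer hk, tailProb]
  congr 1
  ring

section Law

variable {Ω : Type*} [MeasurableSpace Ω] {P : Measure Ω} [IsFiniteMeasure P]

theorem _root_.ProbabilityTheory.IndepFun.map_sub_eq_diffLaw {u v : Ω → ℝ} {ν : Measure ℝ}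
    (huv : IndepFun u v P) (hu : AEMeasurable u P) (hv : AEMeasurable v P) (hu' : P.map u = ν)
    (hv' : P.map v = ν) : P.map (fun ω => u ω - v ω) = diffLaw ν := by
  have hcomp := AEMeasurable.map_map_of_aemeasurable (g := fun p : ℝ × ℝ => p.1 - p.2)
    (by fun_prop) (hu.prodMk hv)
  rw [(indepFun_iff_map_prod_eq_prod_map_map hu hv).1 huv, hu', hv'] at hcomp
  exact hcomp.symm

theorem map_sub_sub_prod_eq {ν μ₁ μ₂ : Measure ℝ} [IsProbabilityMeasure ν]
    [IsProbabilityMeasure μ₁] [IsProbabilityMeasure μ₂] {u₁ u₂ u₃ u₄ s₁ s₂ : Ω → ℝ}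
    (hind : iIndepFun ![u₁, u₂, u₃, u₄, s₁, s₂] P) (h₁ : P.map u₁ = ν) (h₂ : P.map u₂ = ν)
    (h₃ : P.map u₃ = ν) (h₄ : P.map u₄ = ν) (hs₁ : P.map s₁ = μ₁) (hs₂ : P.map s₂ = μ₂) :
    P.map (fun ω => ((u₁ ω - u₂ ω, u₃ ω - u₄ ω), (s₁ ω, s₂ ω))) =
      ((diffLaw ν).prod (diffLaw ν)).prod (μ₁.prod μ₂) := by
  have hae : ∀ {f : Ω → ℝ} {μ : Measure ℝ} [IsProbabilityMeasure μ], P.map f = μ →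
      AEMeasurable f P := fun h => .of_map_ne_zero (by rw [h]; exact IsProbabilityMeasure.ne_zero _)
  have hu₁ := hae h₁; have hu₂ := hae h₂; have hu₃ := hae h₃; have hu₄ := hae h₄
  have hs₁m := hae hs₁; have hs₂m := hae hs₂
  have hmeas : ∀ i, AEMeasurable (![u₁, u₂, u₃, u₄, s₁, s₂] i) P := by
    intro i
    fin_cases i
    exacts [hu₁, hu₂, hu₃, hu₄, hs₁m, hs₂m]
  have hu₁₂ : IndepFun u₁ u₂ P := hind.indepFun (show (0 : Fin 6) ≠ 1 by decide)
  have hu₃₄ : IndepFun u₃ u₄ P := hind.indepFun (show (2 : Fin 6) ≠ 3 by decide)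
  have hs : IndepFun s₁ s₂ P := hind.indepFun (show (4 : Fin 6) ≠ 5 by decide)
  have hdiffs : IndepFun (fun ω => u₁ ω - u₂ ω) (fun ω => u₃ ω - u₄ ω) P :=
    (hind.indepFun_prodMk_prodMk₀ hmeas 0 1 2 3 (by decide) (by decide) (by decide)
      (by decide)).comp (φ := fun p : ℝ × ℝ => p.1 - p.2) (ψ := fun p : ℝ × ℝ => p.1 - p.2)
      (by fun_prop) (by fun_prop)
  have hgroups : IndepFun (fun ω => (u₁ ω - u₂ ω, u₃ ω - u₄ ω)) (fun ω => (s₁ ω, s₂ ω)) P :=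
    (hind.indepFun_finset₀ {0, 1, 2, 3} {4, 5} (by decide) hmeas).comp
      (φ := fun x : ({0, 1, 2, 3} : Finset (Fin 6)) → ℝ =>
        (x ⟨0, by decide⟩ - x ⟨1, by decide⟩, x ⟨2, by decide⟩ - x ⟨3, by decide⟩))
      (ψ := fun x : ({4, 5} : Finset (Fin 6)) → ℝ => (x ⟨4, by decide⟩, x ⟨5, by decide⟩))
      (by fun_prop) (by fun_prop)
  rw [(indepFun_iff_map_prod_eq_prod_map_map (by fun_prop) (by fun_prop)).1 hgroups,
    (indepFun_iff_map_prod_eq_prod_map_map (by fun_prop) (by fun_prop)).1 hdiffs,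
    (indepFun_iff_map_prod_eq_prod_map_map hs₁m hs₂m).1 hs,
    hu₁₂.map_sub_eq_diffLaw hu₁ hu₂ h₁ h₂, hu₃₄.map_sub_eq_diffLaw hu₃ hu₄ h₃ h₄, hs₁, hs₂]

end Law

theorem measure_biUnion_range_prod_sdiff {α β : Type*} [MeasurableSpace α] [MeasurableSpace β]
    (ρ : Measure α) (μ : Measure β) [SFinite ρ] [SFinite μ] {S : ℕ → Set α} {T : ℕ → Set β}
    (hS : ∀ j, MeasurableSet (S j)) (hT : ∀ j, MeasurableSet (T j)) (hmono : Monotone T)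
    (n : ℕ) :
    (ρ.prod μ) (⋃ j ∈ Finset.range n, S j ×ˢ (T (j + 1) \ T j)) =
      ∑ j ∈ Finset.range n, ρ (S j) * μ (T (j + 1) \ T j) := by
  have hdisj : ∀ i j, i < j → Disjoint (T (i + 1) \ T i) (T (j + 1) \ T j) :=
    fun i j hij => disjoint_left.2 fun _ hi hj => hj.2 (hmono hij hi.1)
  rw [measure_biUnion_finset (fun i _ j _ hij => disjoint_prod.2 (Or.inr <|
      hij.lt_or_gt.elim (hdisj i j) fun h => (hdisj j i h).symm))
    (fun j _ => (hS j).prod ((hT _).diff (hT j)))]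
  simp_rw [Measure.prod_prod]

instance : IsProbabilityMeasure (volume.restrict (Icc (0 : ℝ) 1)) :=
  ⟨by simp [Real.volume_Icc]⟩

local notation "ϑ" => volume.restrict (Icc (0 : ℝ) 1)

theorem unitLaw_Iic {q : ℝ} (hq : q ∈ Icc 0 1) : ϑ (Iic q) = ENNReal.ofReal q := by
  have hIcc : Iic q ∩ Icc 0 1 = Icc 0 q := by
    ext t; simp only [mem_inter_iff, mem_Iic, mem_Icc]; grind
  rw [Measure.restrict_apply measurableSet_Iic, hIcc, Real.volume_Icc, sub_zero]

theorem unitLaw_Ici {q : ℝ} (hq : q ∈ Icc 0 1) : ϑ (Ici (1 - q)) = ENNReal.ofReal q := by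
  have hIcc : Ici (1 - q) ∩ Icc 0 1 = Icc (1 - q) 1 := by
    ext t; simp only [mem_inter_iff, mem_Ici, mem_Icc]; grind
  rw [Measure.restrict_apply measurableSet_Ici, hIcc, Real.volume_Icc, sub_sub_cancel]

local notation "Λ" => Measure.prod (Measure.prod τ τ) (Measure.prod ϑ ϑ)

/-- The coordinates are `((a - b, c - d), (θ₁, θ₂))`, in which the expressions of the theorem
read `θᵢ (a - b) + (1 - θᵢ) (c - d)`. -/
def safeRegion : Set ((ℝ × ℝ) × (ℝ × ℝ)) :=
  {z | 0 ≤ z.2.1 * z.1.1 + (1 - z.2.1) * z.1.2 ∧ 0 ≤ z.2.2 * z.1.1 + (1 - z.2.2) * z.1.2}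

theorem measurableSet_safeRegion : MeasurableSet safeRegion := by
  rw [safeRegion, ofPred_and]
  exact (measurableSet_le measurable_const (by fun_prop)).inter
    (measurableSet_le measurable_const (by fun_prop))

theorem nonneg_of_mem_tailRegion {q t : ℝ} {p : ℝ × ℝ} (hq : 0 ≤ q) (hq1 : q < 1)
    (hp : p ∈ tailRegion (q / (1 - q))) (ht : t ≤ q) : 0 ≤ t * p.1 + (1 - t) * p.2 := by
  have hp2 : 0 ≤ p.2 := (tailRegion_subset (div_nonneg hq (by linarith)) hp).2
  have hcross : q * -p.1 ≤ (1 - q) * p.2 := by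
    have := hp.2
    rw [div_mul_eq_mul_div, div_le_iff₀ (by linarith)] at this
    linarith
  nlinarith [hp.1]

theorem nonnegQuadrant_subset :
    (Ici 0 ×ˢ Ici 0) ×ˢ (Icc 0 1 ×ˢ Icc 0 1) ⊆ safeRegion ∩ (Ici 0 ×ˢ Ici 0) ×ˢ univ := by
  rintro z ⟨⟨hx, hy⟩, ⟨ht₁, ht₁'⟩, ⟨ht₂, ht₂'⟩⟩
  exact ⟨⟨add_nonneg (mul_nonneg ht₁ hx) (mul_nonneg (sub_nonneg.2 ht₁') hy),
    add_nonneg (mul_nonneg ht₂ hx) (mul_nonneg (sub_nonneg.2 ht₂') hy)⟩, ⟨hx, hy⟩, mem_univ _⟩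

theorem measure_nonnegQuadrant :
    Λ ((Ici 0 ×ˢ Ici 0) ×ˢ (Icc 0 1 ×ˢ Icc 0 1)) = ENNReal.ofReal (1 / 4) := by
  rw [Measure.prod_prod, Measure.prod_prod, Measure.prod_prod, diffLaw_uniform_Ici le_rfl,
    Measure.restrict_apply_self, Real.volume_Icc, ← ENNReal.ofReal_mul (by positivity)]
  norm_num

noncomputable def grid (j : ℕ) : ℝ := j / 30

theorem grid_mono : Monotone grid := fun i j hij => by
  unfold grid; gcongr

theorem grid_mem_Icc {j : ℕ} (hj : j ≤ 30) : grid j ∈ Icc 0 1 := by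
  have : (j : ℝ) ≤ 30 := by exact_mod_cast hj
  exact ⟨by unfold grid; positivity, by unfold grid; rw [div_le_one (by norm_num)]; exact this⟩

theorem grid_succ_mem_Ioo {j : ℕ} (hj : j < 29) : grid (j + 1) ∈ Ioo 0 1 := by
  have : (j : ℝ) + 1 < 30 := by exact_mod_cast (by omega : j + 1 < 30)
  refine ⟨by unfold grid; positivity, ?_⟩
  unfold grid; rw [div_lt_one (by norm_num)]; push_cast; exact this

def gridTail (j : ℕ) : Set (ℝ × ℝ) := tailRegion (grid (j + 1) / (1 - grid (j + 1)))

noncomputable def stairSum : ℝ :=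
  ∑ j ∈ Finset.range 29,
    tailProb (grid (j + 1) / (1 - grid (j + 1))) * (grid (j + 1) ^ 2 - grid j ^ 2)

theorem two_fifths_le_stairSum : (2 / 5 : ℝ) ≤ 1 / 4 + 2 * stairSum := by
  simp only [stairSum, Finset.sum_range_succ, Finset.sum_range_zero]
  norm_num [tailProb, grid]

theorem diffLaw_prod_gridTail {j : ℕ} (hj : j < 29) :
    ((τ).prod τ) (gridTail j) = ENNReal.ofReal (tailProb (grid (j + 1) / (1 - grid (j + 1)))) := by
  obtain ⟨hq, hq1⟩ := grid_succ_mem_Ioo hj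
  exact diffLaw_prod_tailRegion (div_pos hq (by linarith))

def stairs (S : ℕ → Set (ℝ × ℝ)) (s : ℕ → Set ℝ) : Set ((ℝ × ℝ) × (ℝ × ℝ)) :=
  ⋃ j ∈ Finset.range 29, S j ×ˢ (s (j + 1) ×ˢ s (j + 1) \ s j ×ˢ s j)

theorem measurableSet_stairs {S : ℕ → Set (ℝ × ℝ)} {s : ℕ → Set ℝ}
    (hS : ∀ j, MeasurableSet (S j)) (hs : ∀ j, MeasurableSet (s j)) :
    MeasurableSet (stairs S s) :=
  Finset.measurableSet_biUnion _ fun j _ =>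
    (hS j).prod (((hs _).prod (hs _)).diff ((hs j).prod (hs j)))

theorem ofReal_stairSum_le {S : ℕ → Set (ℝ × ℝ)} {s : ℕ → Set ℝ} (hS : ∀ j, MeasurableSet (S j))
    (hSτ : ∀ j < 29,
      ((τ).prod τ) (S j) = ENNReal.ofReal (tailProb (grid (j + 1) / (1 - grid (j + 1)))))
    (hs : ∀ j, MeasurableSet (s j)) (hmono : Monotone s)
    (hsϑ : ∀ j ≤ 30, ϑ (s j) = ENNReal.ofReal (grid j)) :
    ENNReal.ofReal stairSum ≤ Λ (stairs S s) := by
  have hsq : ∀ j ≤ 30, ((ϑ).prod ϑ) (s j ×ˢ s j) = ENNReal.ofReal (grid j ^ 2) := fun j hj => by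
    rw [Measure.prod_prod, hsϑ j hj, ← ENNReal.ofReal_mul (grid_mem_Icc hj).1, sq]
  rw [stairs, measure_biUnion_range_prod_sdiff _ _ hS (fun j => (hs j).prod (hs j))
    (fun i j hij => prod_mono (hmono hij) (hmono hij))]
  refine (Finset.le_sum_of_subadditive _ ENNReal.ofReal_zero.le
    (fun _ _ => ENNReal.ofReal_add_le) _ _).trans (Finset.sum_le_sum fun j hj => ?_)
  rw [Finset.mem_range] at hj
  rw [measure_sdiff (prod_mono (hmono j.le_succ) (hmono j.le_succ))
      ((hs j).prod (hs j)).nullMeasurableSet (measure_ne_top _ _), hsq _ (by omega),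
    hsq _ (by omega), ← ENNReal.ofReal_sub _ (sq_nonneg _), hSτ j hj,
    ← ENNReal.ofReal_mul' (sub_nonneg.2 (pow_le_pow_left₀ (grid_mem_Icc (by omega)).1
      (grid_mono j.le_succ) 2))]

theorem stairs_Iic_subset :
    stairs gridTail (fun j => Iic (grid j)) ⊆ safeRegion ∩ (Iio 0 ×ˢ Ici 0) ×ˢ univ := by
  intro z hz
  simp only [stairs, mem_iUnion, Finset.mem_range, mem_prod, mem_sdiff, mem_Iic] at hz
  obtain ⟨j, hj, hz1, ⟨ht₁, ht₂⟩, -⟩ := hz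
  obtain ⟨hq, hq1⟩ := grid_succ_mem_Ioo hj
  exact ⟨⟨nonneg_of_mem_tailRegion hq.le hq1 hz1 ht₁, nonneg_of_mem_tailRegion hq.le hq1 hz1 ht₂⟩,
    tailRegion_subset (div_nonneg hq.le (by linarith)) hz1, mem_univ _⟩

theorem stairs_Ici_subset :
    stairs (fun j => Prod.swap ⁻¹' gridTail j) (fun j => Ici (1 - grid j)) ⊆
      safeRegion ∩ (Ici 0 ×ˢ Iio 0) ×ˢ univ := by
  intro z hz
  simp only [stairs, mem_iUnion, Finset.mem_range, mem_prod, mem_sdiff, mem_Ici,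
    mem_preimage] at hz
  obtain ⟨j, hj, hz1, ⟨ht₁, ht₂⟩, -⟩ := hz
  obtain ⟨hq, hq1⟩ := grid_succ_mem_Ioo hj
  have hsafe : ∀ t, 1 - grid (j + 1) ≤ t → 0 ≤ t * z.1.1 + (1 - t) * z.1.2 := fun t ht => by
    have := nonneg_of_mem_tailRegion (t := 1 - t) hq.le hq1 hz1 (by linarith)
    simp only [Prod.fst_swap, Prod.snd_swap] at this
    linarith
  have hquad := tailRegion_subset (div_nonneg hq.le (by linarith)) hz1
  exact ⟨⟨hsafe _ ht₁, hsafe _ ht₂⟩, ⟨hquad.2, hquad.1⟩, mem_univ _⟩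

theorem ofReal_two_fifths_le_safeRegion : ENNReal.ofReal (2 / 5) ≤ Λ safeRegion := by
  set A : Set ((ℝ × ℝ) × (ℝ × ℝ)) := (Ici 0 ×ˢ Ici 0) ×ˢ (Icc 0 1 ×ˢ Icc 0 1)
  set H := stairs (fun j => Prod.swap ⁻¹' gridTail j) (fun j => Ici (1 - grid j))
  set H' := stairs gridTail (fun j => Iic (grid j))
  have hH : ENNReal.ofReal stairSum ≤ Λ H :=
    ofReal_stairSum_le (fun _ => measurable_swap (measurableSet_tailRegion _))
      (fun j hj => by
        rw [Measure.measurePreserving_swap.measure_preimage (s := gridTail j)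
          (measurableSet_tailRegion _).nullMeasurableSet, diffLaw_prod_gridTail hj])
      (fun _ => measurableSet_Ici) (fun i j hij => Ici_subset_Ici.2 (by linarith [grid_mono hij]))
      (fun j hj => unitLaw_Ici (grid_mem_Icc hj))
  have hH' : ENNReal.ofReal stairSum ≤ Λ H' :=
    ofReal_stairSum_le (fun _ => measurableSet_tailRegion _) (fun _ => diffLaw_prod_gridTail)
      (fun _ => measurableSet_Iic) (fun i j hij => Iic_subset_Iic.2 (grid_mono hij))
      (fun j hj => unitLaw_Iic (grid_mem_Icc hj))
  have hAH : Disjoint A H := disjoint_left.2 fun _ hA hH =>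
    (mem_Ici.1 (nonnegQuadrant_subset hA).2.1.2).not_gt (stairs_Ici_subset hH).2.1.2
  have hAHH' : Disjoint (A ∪ H) H' := disjoint_union_left.2
    ⟨disjoint_left.2 fun _ hA hH' =>
      (mem_Ici.1 (nonnegQuadrant_subset hA).2.1.1).not_gt (stairs_Iic_subset hH').2.1.1,
    disjoint_left.2 fun _ hH hH' =>
      (mem_Ici.1 (stairs_Ici_subset hH).2.1.1).not_gt (stairs_Iic_subset hH').2.1.1⟩
  calc ENNReal.ofReal (2 / 5)
      ≤ ENNReal.ofReal (1 / 4) + ENNReal.ofReal stairSum + ENNReal.ofReal stairSum :=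
        (ENNReal.ofReal_le_ofReal (by linarith [two_fifths_le_stairSum])).trans
          (ENNReal.ofReal_add_le.trans (add_le_add_left ENNReal.ofReal_add_le _))
    _ ≤ Λ A + Λ H + Λ H' := by rw [measure_nonnegQuadrant]; gcongr
    _ = Λ (A ∪ H ∪ H') := by
        rw [measure_union hAHH' (measurableSet_stairs (fun _ => measurableSet_tailRegion _)
          fun _ => measurableSet_Iic), measure_union hAH (measurableSet_stairs
            (fun _ => measurable_swap (measurableSet_tailRegion _)) fun _ => measurableSet_Ici)]
    _ ≤ Λ safeRegion := measure_mono <| union_subset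
        (union_subset (fun _ h => (nonnegQuadrant_subset h).1) fun _ h => (stairs_Ici_subset h).1)
        fun _ h => (stairs_Iic_subset h).1

end StagHunt

theorem randomized_staghunt_failure_prob_general {Ω : Type*} [MeasurableSpace Ω]
    (P : Measure Ω) [IsProbabilityMeasure P]
    (a b c d θ₁ θ₂ : Ω → ℝ)
    (hindep : iIndepFun ![a, b, c, d, θ₁, θ₂] P)
    (ha : Measure.map a P = (volume (Set.Icc (-1:ℝ) 1))⁻¹ • volume.restrict (Set.Icc (-1:ℝ) 1))
    (hb : Measure.map b P = (volume (Set.Icc (-1:ℝ) 1))⁻¹ • volume.restrict (Set.Icc (-1:ℝ) 1))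
    (hc : Measure.map c P = (volume (Set.Icc (-1:ℝ) 1))⁻¹ • volume.restrict (Set.Icc (-1:ℝ) 1))
    (hd : Measure.map d P = (volume (Set.Icc (-1:ℝ) 1))⁻¹ • volume.restrict (Set.Icc (-1:ℝ) 1))
    (h1 : Measure.map θ₁ P = volume.restrict (Set.Icc (0:ℝ) 1))
    (h2 : Measure.map θ₂ P = volume.restrict (Set.Icc (0:ℝ) 1)) :
    P {ω | (a ω + d ω - b ω - c ω) * θ₁ ω + c ω - d ω < 0 ∨
           (a ω + d ω - b ω - c ω) * θ₂ ω + c ω - d ω < 0} ≤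
      ENNReal.ofReal 0.6 := by
  set Z : Ω → (ℝ × ℝ) × (ℝ × ℝ) := fun ω => ((a ω - b ω, c ω - d ω), (θ₁ ω, θ₂ ω))
  have hZ := StagHunt.map_sub_sub_prod_eq (ν := volume[|Icc (-1 : ℝ) 1]) hindep ha hb hc hd h1 h2
  have hE : {ω | (a ω + d ω - b ω - c ω) * θ₁ ω + c ω - d ω < 0 ∨
      (a ω + d ω - b ω - c ω) * θ₂ ω + c ω - d ω < 0} = Z ⁻¹' StagHunt.safeRegionᶜ := by
    ext ω
    simp only [StagHunt.safeRegion, Z, mem_ofPred_eq, mem_preimage, mem_compl_iff, not_and_or,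
      not_le]
    ring_nf
  rw [hE, ← Measure.map_apply_of_aemeasurable (.of_map_ne_zero (by
      rw [hZ]; exact IsProbabilityMeasure.ne_zero _)) StagHunt.measurableSet_safeRegion.compl,
    hZ, prob_compl_eq_one_sub StagHunt.measurableSet_safeRegion]
  calc _ ≤ 1 - ENNReal.ofReal (2 / 5) :=
        tsub_le_tsub_left StagHunt.ofReal_two_fifths_le_safeRegion 1
    _ = ENNReal.ofReal 0.6 := by
        rw [← ENNReal.ofReal_one, ← ENNReal.ofReal_sub _ (by norm_num)]
        norm_num

theorem randomized_staghunt_failure_prob {Ω : Type*} [MeasurableSpace Ω]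
    (P : Measure Ω) [IsProbabilityMeasure P]
    (a b c d θ₁ θ₂ : Ω → ℝ)
    (hma : Measurable a) (hmb : Measurable b) (hmc : Measurable c)
    (hmd : Measurable d) (hm1 : Measurable θ₁) (hm2 : Measurable θ₂)
    (hindep : iIndepFun ![a, b, c, d, θ₁, θ₂] P)
    (ha : Measure.map a P = (volume (Set.Icc (-1:ℝ) 1))⁻¹ • volume.restrict (Set.Icc (-1:ℝ) 1))
    (hb : Measure.map b P = (volume (Set.Icc (-1:ℝ) 1))⁻¹ • volume.restrict (Set.Icc (-1:ℝ) 1))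
    (hc : Measure.map c P = (volume (Set.Icc (-1:ℝ) 1))⁻¹ • volume.restrict (Set.Icc (-1:ℝ) 1))
    (hd : Measure.map d P = (volume (Set.Icc (-1:ℝ) 1))⁻¹ • volume.restrict (Set.Icc (-1:ℝ) 1))
    (h1 : Measure.map θ₁ P = volume.restrict (Set.Icc (0:ℝ) 1))
    (h2 : Measure.map θ₂ P = volume.restrict (Set.Icc (0:ℝ) 1)) :
    P {ω | (a ω + d ω - b ω - c ω) * θ₁ ω + c ω - d ω < 0 ∨
           (a ω + d ω - b ω - c ω) * θ₂ ω + c ω - d ω < 0} ≤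
      ENNReal.ofReal 0.6 :=
  randomized_staghunt_failure_prob_general P a b c d θ₁ θ₂ hindep ha hb hc hd h1 h2
end

section
/- Under gradient ascent dynamics in the symmetric stag-hunt game with a > b ≥ d > c: if both θ₁ < (d−c)/(a+d−b−c) and θ₂ < (d−c)/(a+d−b−c), then after one update (with clipping to [0,1]) both coordinates weakly decrease and remain strictly below the threshold; consequently the iterates can never reach the Stag equilibrium (θ₁,θ₂) = (1,1). -/
theorem gradient_ascent_below_threshold (a b c d α : ℝ) (f g : ℕ → ℝ)
    (hab : a > b) (hbd : b ≥ d) (hdc : d > c) (hα : 0 < α)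
    (hf0 : 0 ≤ f 0) (hg0 : 0 ≤ g 0)
    (h1 : f 0 < (d - c) / (a + d - b - c)) (h2 : g 0 < (d - c) / (a + d - b - c))
    (hfrec : ∀ n, f (n + 1) = max 0 (f n + α * ((a + d - b - c) * g n + c - d)))
    (hgrec : ∀ n, g (n + 1) = max 0 (g n + α * ((a + d - b - c) * f n + c - d))) :
    ∀ n, f (n + 1) ≤ f n ∧ g (n + 1) ≤ g n ∧
      f n < (d - c) / (a + d - b - c) ∧ g n < (d - c) / (a + d - b - c) ∧
      ¬(f n = 1 ∧ g n = 1) := by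
  have hK : 0 < a + d - b - c := by linarith
  set τ := (d - c) / (a + d - b - c) with hτ
  have hτ1 : τ ≤ 1 := by
    rw [hτ, div_le_one hK]; linarith
  -- invariant
  have inv : ∀ n, 0 ≤ f n ∧ 0 ≤ g n ∧ f n < τ ∧ g n < τ := by
    intro n
    induction n with
    | zero => exact ⟨hf0, hg0, h1, h2⟩
    | succ k ih =>
      obtain ⟨hfk, hgk, hfτ, hgτ⟩ := ih
      have hgrad1 : (a + d - b - c) * g k + c - d < 0 := by
        have : (a + d - b - c) * g k < (a + d - b - c) * τ := by
          exact mul_lt_mul_of_pos_left hgτ hK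
        have hτK : (a + d - b - c) * τ = d - c := by
          rw [hτ]; field_simp
        linarith
      have hgrad2 : (a + d - b - c) * f k + c - d < 0 := by
        have : (a + d - b - c) * f k < (a + d - b - c) * τ := by
          exact mul_lt_mul_of_pos_left hfτ hK
        have hτK : (a + d - b - c) * τ = d - c := by
          rw [hτ]; field_simp
        linarith
      have hτ0 : 0 < τ := div_pos (by linarith) hK
      have hf1 : f (k + 1) ≤ f k := by
        rw [hfrec k]
        apply max_le hfk
        nlinarith
      have hg1 : g (k + 1) ≤ g k := by
        rw [hgrec k]
        apply max_le hgk
        nlinarith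
      refine ⟨by rw [hfrec k]; exact le_max_left _ _,
        by rw [hgrec k]; exact le_max_left _ _,
        lt_of_le_of_lt hf1 hfτ, lt_of_le_of_lt hg1 hgτ⟩
  intro n
  obtain ⟨hfk, hgk, hfτ, hgτ⟩ := inv n
  obtain ⟨hfk', hgk', hfτ', hgτ'⟩ := inv (n + 1)
  have hgrad1 : (a + d - b - c) * g n + c - d < 0 := by
    have : (a + d - b - c) * g n < (a + d - b - c) * τ := mul_lt_mul_of_pos_left hgτ hK
    have hτK : (a + d - b - c) * τ = d - c := by rw [hτ]; field_simp
    linarith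
  have hgrad2 : (a + d - b - c) * f n + c - d < 0 := by
    have : (a + d - b - c) * f n < (a + d - b - c) * τ := mul_lt_mul_of_pos_left hfτ hK
    have hτK : (a + d - b - c) * τ = d - c := by rw [hτ]; field_simp
    linarith
  refine ⟨?_, ?_, hfτ, hgτ, ?_⟩
  · rw [hfrec n]; apply max_le hfk; nlinarith
  · rw [hgrec n]; apply max_le hgk; nlinarith
  · rintro ⟨hf1, -⟩
    have : f n < 1 := lt_of_lt_of_le hfτ hτ1
    linarith
end
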